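/- arXiv:2603.15063 — 3 statements merged into one kernel-verified Lean document; each statement's English description precedes it below -/
import Mathlib

section
/- Let Â ∈ ℝ^{n×n}, B̂ ∈ ℝ^{n×m}, K ∈ ℝ^{m×n}, Δ_S = [Δ_A Δ_B] ∈ ℝ^{n×(n+m)} with Δ_S ≥ 0 (Δ_A its first n columns, Δ_B its last m columns), and w̄ ∈ ℝ^n with w̄ ≥ 0. Set Â_K = Â + B̂K, Δ_K = Δ_A + Δ_B|K|, ℐ_Δ = [±Δ_S], 𝒲 = [±w̄] ⊆ ℝ^n, and 𝒜_K = { Â_K + D[Iₙ; K] : |D| ≤ Δ_S } (with [Iₙ; K] the (n+m)×n vertical stacking). Given sequences z(i) ∈ ℝ^n and v(i) ∈ ℝ^m, define the sets 𝒮(0) = {0} and 𝒮(j+1) = 𝒜_K 𝒮(j) ⊕ ℐ_Δ[z(j); v(j)] ⊕ 𝒲. Define ℐ^Δ(j) = box(𝕋_{ℐ_{A_K}}^j(⟨0; E(Δ_S)⟩)) and ℐ^𝒲(j) = box(𝕋_{ℐ_{A_K}}^j(⟨0; E(w̄)⟩)), where ℐ_{A_K} = Â_K ⊕ [±Δ_K],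 and let ℬ(j) = Σ_{i=0}^{j−1} ℐ^Δ(j−i−1)[z(i); v(i)] ⊕ Σ_{i=0}^{j−1} ℐ^𝒲(i). Then 𝒮(j) ⊆ ℬ(j) for all j ≥ 0. -/
/-!
Unrolling the recursion, every point of `𝒮(j)` is `Σ_{i<j} Pᵢ Dᵢ [z(i); v(i)] + Σ_{i<j} Qᵢ wᵢ`,
where `Pᵢ` is a product of `j - i - 1` matrices of `𝒜_K ⊆ ℐ_{A_K}`, `Qᵢ` a product of `i` of them,
`|Dᵢ| ≤ Δ_S` and `|wᵢ| ≤ w̄`. The key fact is that an interval matrix `C ⊕ [±Δ]` maps a matrix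
zonotope `⟨M; G⟩` into `𝕋_ℐ(⟨M; G⟩)`: for `A = C + D` and `X = M + Σ βᵢGᵢ`, the error term `DX` is
bounded entrywise by `Δ(|M| + Σ|Gᵢ|)`, so it is a combination of the single-entry generators
`E(Δ(|M| + Σ|Gᵢ|))` with coefficients in `[-1, 1]`. Hence `Pᵢ Dᵢ` and `Qᵢ wᵢ` lie in the iterated
zonotopes, and a fortiori in their interval hulls.
-/

open Matrix Finset Pointwise

noncomputable section

/-- entrywise absolute value of a real matrix -/
def matAbs {ι κ : Type*} (M : Matrix ι κ ℝ) : Matrix ι κ ℝ := fun i j => |M i j|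

/-- interval matrix `C ⊕ [±Δ] = {C + D : |D| ≤ Δ}` -/
def intervalMat {ι κ : Type*} (C Δ : Matrix ι κ ℝ) : Set (Matrix ι κ ℝ) :=
  {X | ∀ i j, |X i j - C i j| ≤ Δ i j}

/-- representation of a matrix zonotope: a center and a list of generators -/
structure ZRep (ι κ : Type*) where
  c : Matrix ι κ ℝ
  g : List (Matrix ι κ ℝ)

/-- the set of matrices described by a matrix zonotope representation -/
def ZRep.set {ι κ : Type*} (Z : ZRep ι κ) : Set (Matrix ι κ ℝ) :=
  {X | ∃ β : Fin Z.g.length → ℝ, (∀ i, |β i| ≤ 1) ∧ X = Z.c + ∑ i, β i • Z.g.get i}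

/-- interval hull `box(⟨M;G⟩) = M ⊕ [± Σ |G_i|]` of a matrix zonotope -/
def ZRep.box {ι κ : Type*} (Z : ZRep ι κ) : Set (Matrix ι κ ℝ) :=
  intervalMat Z.c ((Z.g.map matAbs).sum)

/-- the family `E(F)` of single-entry matrices, as a list -/
def EList {ι κ : Type*} [Fintype ι] [Fintype κ] [DecidableEq ι] [DecidableEq κ]
    (F : Matrix ι κ ℝ) : List (Matrix ι κ ℝ) :=
  (Finset.univ : Finset (ι × κ)).toList.map fun p => Matrix.single p.1 p.2 (F p.1 p.2)

/-- the operator `𝕋_ℐ` (for `ℐ = C ⊕ [±Δ]`) acting on zonotope representations: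
`𝕋_ℐ(⟨M;G₁,…,G_g⟩) = ⟨CM; CG₁,…,CG_g, E(Δ(|M|+Σ|G_i|))⟩` -/
def Tstep {ι κ μ : Type*} [Fintype ι] [Fintype κ] [Fintype μ] [DecidableEq ι] [DecidableEq μ]
    (C Δ : Matrix ι κ ℝ) (Z : ZRep κ μ) : ZRep ι μ :=
  ⟨C * Z.c, Z.g.map (fun G => C * G) ++ EList (Δ * (matAbs Z.c + (Z.g.map matAbs).sum))⟩

/-- a vector of `ℝ^n` viewed as a column matrix -/
def colVec {n : ℕ} (w : Fin n → ℝ) : Matrix (Fin n) (Fin 1) ℝ := fun i _ => w i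

/-- the set `𝒜_K = {Â_K + D[Iₙ; K] : |D| ≤ Δ_S}` -/
def AKset {n m : ℕ} (AhK : Matrix (Fin n) (Fin n) ℝ) (K : Matrix (Fin m) (Fin n) ℝ)
    (ΔS : Matrix (Fin n) (Fin n ⊕ Fin m) ℝ) : Set (Matrix (Fin n) (Fin n) ℝ) :=
  {X | ∃ D ∈ intervalMat 0 ΔS, X = AhK + D * Matrix.fromRows 1 K}

lemma mem_intervalMat_zero_iff {ι κ : Type*} {X Δ : Matrix ι κ ℝ} :
    X ∈ intervalMat 0 Δ ↔ ∀ i j, |X i j| ≤ Δ i j := by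
  simp [intervalMat]

lemma abs_mul_apply_le {ι κ μ : Type*} [Fintype κ] {D Δ : Matrix ι κ ℝ} {X F : Matrix κ μ ℝ}
    (hD : ∀ i j, |D i j| ≤ Δ i j) (hX : ∀ i j, |X i j| ≤ F i j) (i : ι) (j : μ) :
    |(D * X) i j| ≤ (Δ * F) i j :=
  calc |(D * X) i j| ≤ ∑ r, |D i r| * |X r j| := by
        simpa only [mul_apply, abs_mul] using
          Finset.abs_sum_le_sum_abs (fun r => D i r * X r j) univ
    _ ≤ ∑ r, Δ i r * F r j :=
        Finset.sum_le_sum fun r _ =>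
          mul_le_mul (hD i r) (hX r j) (abs_nonneg _) ((abs_nonneg _).trans (hD i r))

section SegmentSum

variable {ι κ : Type*}

def symmSegment (G : Matrix ι κ ℝ) : Set (Matrix ι κ ℝ) :=
  {X | ∃ β : ℝ, |β| ≤ 1 ∧ β • G = X}

def segmentSum (l : List (Matrix ι κ ℝ)) : Set (Matrix ι κ ℝ) :=
  (l.map symmSegment).sum

@[simp]
lemma segmentSum_nil : segmentSum ([] : List (Matrix ι κ ℝ)) = {0} := rfl

@[simp]
lemma segmentSum_cons (G : Matrix ι κ ℝ) (l : List (Matrix ι κ ℝ)) :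
    segmentSum (G :: l) = symmSegment G + segmentSum l := rfl

lemma segmentSum_append (l₁ l₂ : List (Matrix ι κ ℝ)) :
    segmentSum (l₁ ++ l₂) = segmentSum l₁ + segmentSum l₂ := by
  simp [segmentSum]

lemma mem_segmentSum_iff {l : List (Matrix ι κ ℝ)} {X : Matrix ι κ ℝ} :
    X ∈ segmentSum l ↔ ∃ β : Fin l.length → ℝ, (∀ i, |β i| ≤ 1) ∧ X = ∑ i, β i • l.get i := by
  induction l generalizing X with
  | nil => simp
  | cons G l ih =>
    simp only [segmentSum_cons, Set.mem_add, symmSegment, Set.mem_ofPred_eq, ih,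
      List.length_cons, Fin.exists_fin_succ_pi, Fin.forall_fin_succ, Fin.sum_univ_succ,
      Fin.cons_zero, Fin.cons_succ, List.get_cons_zero]
    constructor
    · rintro ⟨_, ⟨b, hb, rfl⟩, _, ⟨β, hβ, rfl⟩, rfl⟩
      exact ⟨b, β, ⟨hb, hβ⟩, rfl⟩
    · rintro ⟨b, β, ⟨hb, hβ⟩, rfl⟩
      exact ⟨_, ⟨b, hb, rfl⟩, _, ⟨β, hβ, rfl⟩, rfl⟩

lemma image_mul_segmentSum {μ : Type*} [Fintype ι] (A : Matrix μ ι ℝ)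
    (l : List (Matrix ι κ ℝ)) :
    (A * ·) '' segmentSum l = segmentSum (l.map (A * ·)) := by
  have h := Set.image_list_sum (addMonoidHomMulLeft (n := κ) A) (l.map symmSegment)
  simp only [addMonoidHomMulLeft_apply] at h
  rw [segmentSum, h, segmentSum, List.map_map, List.map_map]
  congr 1
  refine List.map_congr_left fun G _ => ?_
  ext X
  simp [symmSegment, Matrix.mul_smul]

lemma abs_apply_le_of_mem_segmentSum {l : List (Matrix ι κ ℝ)} {X : Matrix ι κ ℝ}
    (hX : X ∈ segmentSum l) (i : ι) (j : κ) : |X i j| ≤ (l.map matAbs).sum i j := by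
  induction l generalizing X with
  | nil => simp_all
  | cons G l ih =>
    obtain ⟨_, ⟨b, hb, rfl⟩, Y, hY, rfl⟩ := hX
    calc |(b • G + Y) i j| ≤ |b| * |G i j| + |Y i j| := by
          simpa [abs_mul] using abs_add_le (b * G i j) (Y i j)
      _ ≤ 1 * |G i j| + (l.map matAbs).sum i j := by gcongr; exact ih hY
      _ = ((G :: l).map matAbs).sum i j := by simp [matAbs]

lemma single_mem_symmSegment [DecidableEq ι] [DecidableEq κ] {a b : ℝ} (h : |a| ≤ b)
    (i : ι) (j : κ) : single i j a ∈ symmSegment (single i j b) := by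
  rcases (abs_nonneg a).trans h |>.eq_or_lt with hb | hb
  · exact ⟨0, by simp, by simp [abs_nonpos_iff.1 (hb ▸ h)]⟩
  · refine ⟨a / b, ?_, ?_⟩
    · rw [abs_div, abs_of_pos hb]; exact div_le_one_of_le₀ h hb.le
    · rw [smul_single, smul_eq_mul, div_mul_cancel₀ _ hb.ne']

lemma mem_segmentSum_EList [Fintype ι] [Fintype κ] [DecidableEq ι] [DecidableEq κ]
    {D F : Matrix ι κ ℝ} (h : ∀ i j, |D i j| ≤ F i j) : D ∈ segmentSum (EList F) := by
  have hD : D =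
      ((Finset.univ : Finset (ι × κ)).toList.map fun p => single p.1 p.2 (D p.1 p.2)).sum := by
    rw [Finset.sum_map_toList, Fintype.sum_prod_type]
    exact matrix_eq_sum_single D
  rw [hD, segmentSum, EList, List.map_map]
  exact Set.list_sum_mem_list_sum _ _ _ fun p _ => single_mem_symmSegment (h p.1 p.2) p.1 p.2

end SegmentSum

namespace ZRep

variable {ι κ : Type*}

lemma mem_set_iff {Z : ZRep ι κ} {X : Matrix ι κ ℝ} :
    X ∈ Z.set ↔ ∃ Y ∈ segmentSum Z.g, X = Z.c + Y := by
  simp only [ZRep.set, mem_segmentSum_iff, Set.mem_ofPred_eq]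
  constructor
  · rintro ⟨β, hβ, rfl⟩
    exact ⟨_, ⟨β, hβ, rfl⟩, rfl⟩
  · rintro ⟨_, ⟨β, hβ, rfl⟩, rfl⟩
    exact ⟨β, hβ, rfl⟩

lemma set_subset_box (Z : ZRep ι κ) : Z.set ⊆ Z.box := by
  intro X hX i j
  obtain ⟨Y, hY, rfl⟩ := mem_set_iff.1 hX
  simpa using abs_apply_le_of_mem_segmentSum hY i j

lemma mem_set_of_EList [Fintype ι] [Fintype κ] [DecidableEq ι] [DecidableEq κ]
    {D F : Matrix ι κ ℝ} (h : ∀ i j, |D i j| ≤ F i j) : D ∈ (⟨0, EList F⟩ : ZRep ι κ).set :=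
  mem_set_iff.2 ⟨D, mem_segmentSum_EList h, (zero_add D).symm⟩

end ZRep

lemma mul_mem_Tstep_set {ι κ μ : Type*} [Fintype ι] [Fintype κ] [Fintype μ] [DecidableEq ι]
    [DecidableEq μ] {C Δ A : Matrix ι κ ℝ} {Z : ZRep κ μ} {X : Matrix κ μ ℝ}
    (hA : A ∈ intervalMat C Δ) (hX : X ∈ Z.set) : A * X ∈ (Tstep C Δ Z).set := by
  obtain ⟨Y, hY, rfl⟩ := ZRep.mem_set_iff.1 hX
  have hXabs : ∀ r q, |(Z.c + Y) r q| ≤ (matAbs Z.c + (Z.g.map matAbs).sum) r q := fun r q =>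
    (abs_add_le _ _).trans (add_le_add le_rfl (abs_apply_le_of_mem_segmentSum hY r q))
  have hCY : C * Y ∈ segmentSum (Z.g.map (C * ·)) :=
    image_mul_segmentSum C Z.g ▸ Set.mem_image_of_mem _ hY
  have hDX :
      (A - C) * (Z.c + Y) ∈ segmentSum (EList (Δ * (matAbs Z.c + (Z.g.map matAbs).sum))) :=
    mem_segmentSum_EList (abs_mul_apply_le hA hXabs)
  refine ZRep.mem_set_iff.2 ⟨_, segmentSum_append _ _ ▸ Set.add_mem_add hCY hDX, ?_⟩
  simp only [Tstep, Matrix.sub_mul, Matrix.mul_add]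
  abel

lemma matAbs_fromRows_one {m n : Type*} [DecidableEq n] (K : Matrix m n ℝ) :
    matAbs (fromRows (1 : Matrix n n ℝ) K) = fromRows 1 (matAbs K) := by
  ext (i | i) j <;> simp [matAbs, one_apply, apply_ite]

lemma mul_matAbs_fromRows_one {n m : ℕ} (ΔS : Matrix (Fin n) (Fin n ⊕ Fin m) ℝ)
    (K : Matrix (Fin m) (Fin n) ℝ) :
    ΔS * matAbs (fromRows (1 : Matrix (Fin n) (Fin n) ℝ) K) =
      ΔS.submatrix id Sum.inl + ΔS.submatrix id Sum.inr * matAbs K := by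
  rw [matAbs_fromRows_one, ← fromCols_toCols ΔS, fromCols_mul_fromRows, Matrix.mul_one]
  rfl

lemma AKset_subset_intervalMat {n m : ℕ} (C : Matrix (Fin n) (Fin n) ℝ)
    (K : Matrix (Fin m) (Fin n) ℝ) (ΔS : Matrix (Fin n) (Fin n ⊕ Fin m) ℝ) :
    AKset C K ΔS ⊆
      intervalMat C (ΔS.submatrix id Sum.inl + ΔS.submatrix id Sum.inr * matAbs K) := by
  rintro _ ⟨D, hD, rfl⟩ i j
  rw [← mul_matAbs_fromRows_one, Matrix.add_apply, add_sub_cancel_left]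
  exact abs_mul_apply_le (mem_intervalMat_zero_iff.1 hD) (fun _ _ => le_rfl) i j

section ZonoBound

variable {ι κ ν : Type*} [Fintype ι] [Fintype κ] [Fintype ν] [DecidableEq ι] [DecidableEq κ]
  [DecidableEq ν] (C Δ : Matrix ι ι ℝ) (ZΔ : ZRep ι κ) (ZW : ZRep ι ν) (u : ℕ → Matrix κ ν ℝ)

/-- `ℬ(j)` with the zonotopes `𝕋^k(⟨0; E(·)⟩)` in place of their interval hulls. -/
def zonoBound (j : ℕ) : Set (Matrix ι ν ℝ) :=
  (∑ i ∈ range j, (· * u i) '' ((Tstep C Δ)^[j - i - 1] ZΔ).set) +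
    ∑ i ∈ range j, ((Tstep C Δ)^[i] ZW).set

lemma zonoBound_zero : zonoBound C Δ ZΔ ZW u 0 = {0} := by
  simp [zonoBound, Set.singleton_zero]

variable {C Δ ZΔ ZW u}

lemma mul_add_add_mem_zonoBound_succ {j : ℕ} {A : Matrix ι ι ℝ} {x : Matrix ι ν ℝ}
    {D : Matrix ι κ ℝ} {w : Matrix ι ν ℝ} (hA : A ∈ intervalMat C Δ)
    (hx : x ∈ zonoBound C Δ ZΔ ZW u j) (hD : D ∈ ZΔ.set) (hw : w ∈ ZW.set) :
    A * x + D * u j + w ∈ zonoBound C Δ ZΔ ZW u (j + 1) := by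
  obtain ⟨a, ha, b, hb, rfl⟩ := Set.mem_add.1 hx
  have hAa : A * a ∈ ∑ i ∈ range j, (· * u i) '' ((Tstep C Δ)^[j + 1 - i - 1] ZΔ).set := by
    have h := Set.mem_image_of_mem (addMonoidHomMulLeft A) ha
    rw [Set.image_finsetSum] at h
    refine Set.finsetSum_subset_finsetSum _ _ _ (fun i hi => ?_) h
    rintro _ ⟨_, ⟨M, hM, rfl⟩, rfl⟩
    rw [show j + 1 - i - 1 = (j - i - 1) + 1 by grind, Function.iterate_succ_apply']
    exact ⟨A * M, mul_mem_Tstep_set hA hM, Matrix.mul_assoc _ _ _⟩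
  have hAb : A * b ∈ ∑ i ∈ range j, ((Tstep C Δ)^[i + 1] ZW).set := by
    have h := Set.mem_image_of_mem (addMonoidHomMulLeft A) hb
    rw [Set.image_finsetSum] at h
    refine Set.finsetSum_subset_finsetSum _ _ _ (fun i _ => ?_) h
    rintro _ ⟨M, hM, rfl⟩
    rw [Function.iterate_succ_apply']
    exact mul_mem_Tstep_set hA hM
  rw [zonoBound, sum_range_succ, sum_range_succ', Nat.add_sub_cancel_left, Nat.sub_self,
    Function.iterate_zero_apply, Function.iterate_zero_apply, Matrix.mul_add,
    show A * a + A * b + D * u j + w = (A * a + D * u j) + (A * b + w) by abel]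
  exact Set.add_mem_add (Set.add_mem_add hAa ⟨D, hD, rfl⟩) (Set.add_mem_add hAb hw)

lemma zonoBound_subset (j : ℕ) :
    zonoBound C Δ ZΔ ZW u j ⊆
      (∑ i ∈ range j, (· * u i) '' ((Tstep C Δ)^[j - i - 1] ZΔ).box) +
        ∑ i ∈ range j, ((Tstep C Δ)^[i] ZW).box :=
  Set.add_subset_add
    (Set.finsetSum_subset_finsetSum _ _ _ fun _ _ => Set.image_mono (ZRep.set_subset_box _))
    (Set.finsetSum_subset_finsetSum _ _ _ fun _ _ => ZRep.set_subset_box _)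

end ZonoBound

theorem stmt6_general {n m : ℕ}
    (Ah : Matrix (Fin n) (Fin n) ℝ) (Bh : Matrix (Fin n) (Fin m) ℝ)
    (K : Matrix (Fin m) (Fin n) ℝ)
    (ΔS : Matrix (Fin n) (Fin n ⊕ Fin m) ℝ)
    (wbar : Fin n → ℝ)
    (z : ℕ → Matrix (Fin n) (Fin 1) ℝ) (v : ℕ → Matrix (Fin m) (Fin 1) ℝ)
    (S : ℕ → Set (Matrix (Fin n) (Fin 1) ℝ)) (hS0 : S 0 = {0})
    (hS : ∀ j, S (j + 1) =
      {x | ∃ Am ∈ AKset (Ah + Bh * K) K ΔS, ∃ s ∈ S j, ∃ D ∈ intervalMat 0 ΔS,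
        ∃ w ∈ intervalMat 0 (colVec wbar),
          x = Am * s + D * Matrix.fromRows (z j) (v j) + w}) :
    ∀ j, S j ⊆
      (∑ i ∈ Finset.range j,
        (fun D => D * Matrix.fromRows (z i) (v i)) ''
          ((Tstep (Ah + Bh * K)
              (ΔS.submatrix id Sum.inl + ΔS.submatrix id Sum.inr * matAbs K))^[j - i - 1]
            ⟨0, EList ΔS⟩).box) +
      ∑ i ∈ Finset.range j,
        ((Tstep (Ah + Bh * K)
            (ΔS.submatrix id Sum.inl + ΔS.submatrix id Sum.inr * matAbs K))^[i]
          ⟨0, EList (colVec wbar)⟩).box := by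
  intro j
  refine subset_trans ?_ (zonoBound_subset (ZΔ := ⟨0, EList ΔS⟩)
    (ZW := ⟨0, EList (colVec wbar)⟩) (u := fun i => fromRows (z i) (v i)) j)
  induction j with
  | zero => rw [hS0, zonoBound_zero]
  | succ j ih =>
    rw [hS j]
    rintro _ ⟨A, hA, s, hs, D, hD, w, hw, rfl⟩
    exact mul_add_add_mem_zonoBound_succ (AKset_subset_intervalMat _ K ΔS hA) (ih hs)
      (ZRep.mem_set_of_EList (mem_intervalMat_zero_iff.1 hD))
      (ZRep.mem_set_of_EList (mem_intervalMat_zero_iff.1 hw))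

/-- Proposition 3: `𝒮(j) ⊆ ℬ(j)` for all `j ≥ 0`, where
`ℬ(j) = Σ_{i<j} ℐ^Δ(j−i−1)[z(i); v(i)] ⊕ Σ_{i<j} ℐ^𝒲(i)`,
`ℐ^Δ(j) = box(𝕋_{ℐ_{A_K}}^j(⟨0;E(Δ_S)⟩))` and `ℐ^𝒲(j) = box(𝕋_{ℐ_{A_K}}^j(⟨0;E(w̄)⟩))`. -/
theorem stmt6 {n m : ℕ}
    (Ah : Matrix (Fin n) (Fin n) ℝ) (Bh : Matrix (Fin n) (Fin m) ℝ)
    (K : Matrix (Fin m) (Fin n) ℝ)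
    (ΔS : Matrix (Fin n) (Fin n ⊕ Fin m) ℝ) (hΔS : ∀ i j, 0 ≤ ΔS i j)
    (wbar : Fin n → ℝ) (hw : ∀ i, 0 ≤ wbar i)
    (z : ℕ → Matrix (Fin n) (Fin 1) ℝ) (v : ℕ → Matrix (Fin m) (Fin 1) ℝ)
    (S : ℕ → Set (Matrix (Fin n) (Fin 1) ℝ)) (hS0 : S 0 = {0})
    (hS : ∀ j, S (j + 1) =
      {x | ∃ Am ∈ AKset (Ah + Bh * K) K ΔS, ∃ s ∈ S j, ∃ D ∈ intervalMat 0 ΔS,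
        ∃ w ∈ intervalMat 0 (colVec wbar),
          x = Am * s + D * Matrix.fromRows (z j) (v j) + w}) :
    ∀ j, S j ⊆
      (∑ i ∈ Finset.range j,
        (fun D => D * Matrix.fromRows (z i) (v i)) ''
          ((Tstep (Ah + Bh * K)
              (ΔS.submatrix id Sum.inl + ΔS.submatrix id Sum.inr * matAbs K))^[j - i - 1]
            ⟨0, EList ΔS⟩).box) +
      ∑ i ∈ Finset.range j,
        ((Tstep (Ah + Bh * K)
            (ΔS.submatrix id Sum.inl + ΔS.submatrix id Sum.inr * matAbs K))^[i]
          ⟨0, EList (colVec wbar)⟩).box :=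
  stmt6_general Ah Bh K ΔS wbar z v S hS0 hS
end
end

section
/- One-step entry into the terminal set: in the setting of the feasibility problem below, suppose (1, z(·), v(·)) is feasible at x ∈ ℝ^n with horizon N = 1. Then for every A ∈ ℝ^{n×n}, B ∈ ℝ^{n×m} with |[A B] − [Â B̂]| ≤ Δ_S entrywise and every w ∈ 𝒲, the successor state x⁺ = Ax + Bv(0) + w belongs to 𝒳_f. -/
/-!
At horizon one the tube `ℬ(1) = ℐ^Δ(0)[z(0); v(0)] ⊕ ℐ^𝒲(0)` is `[±Δ_S][x; v(0)] ⊕ [±w̄]`, and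
`Ax + Bv(0) + w = z(1) + ([A B] − [Â B̂])[x; v(0)] + w` exhibits the successor as a point of
`{z(1)} ⊕ ℬ(1)`, which the terminal constraint places in `𝒳_f`.
-/

open Matrix Finset Pointwise

noncomputable section

/-- `ℐ^Δ(j) = [± Σ_{i=0}^{j} |Â_K^{j−i}| F_i]` -/
def IDelta {n m : ℕ} (AhK : Matrix (Fin n) (Fin n) ℝ)
    (FΔ : ℕ → Matrix (Fin n) (Fin n ⊕ Fin m) ℝ) (j : ℕ) :
    Set (Matrix (Fin n) (Fin n ⊕ Fin m) ℝ) :=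
  intervalMat 0 (∑ i ∈ Finset.range (j + 1), matAbs (AhK ^ (j - i)) * FΔ i)

/-- `ℐ^𝒲(j) = [± Σ_{i=0}^{j} |Â_K^{j−i}| F^𝒲_i]`, a set of (column) vectors of `ℝ^n` -/
def IWvec {n : ℕ} (AhK : Matrix (Fin n) (Fin n) ℝ)
    (FW : ℕ → Matrix (Fin n) (Fin 1) ℝ) (j : ℕ) : Set (Matrix (Fin n) (Fin 1) ℝ) :=
  intervalMat 0 (∑ i ∈ Finset.range (j + 1), matAbs (AhK ^ (j - i)) * FW i)

/-- the tube `ℬ(j) = Σ_{i<j} ℐ^Δ(j−i−1)[z(i); v(i)] ⊕ Σ_{i<j} ℐ^𝒲(i)` -/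
def Btube {n m : ℕ} (AhK : Matrix (Fin n) (Fin n) ℝ)
    (FΔ : ℕ → Matrix (Fin n) (Fin n ⊕ Fin m) ℝ) (FW : ℕ → Matrix (Fin n) (Fin 1) ℝ)
    (z : ℕ → Matrix (Fin n) (Fin 1) ℝ) (v : ℕ → Matrix (Fin m) (Fin 1) ℝ) (j : ℕ) :
    Set (Matrix (Fin n) (Fin 1) ℝ) :=
  (∑ i ∈ Finset.range j,
    (fun D => D * Matrix.fromRows (z i) (v i)) '' IDelta AhK FΔ (j - i - 1)) +
  ∑ i ∈ Finset.range j, IWvec AhK FW i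

/-- feasibility of `(N, z(·), v(·))` at `x` for the variable-horizon robust control problem -/
def Feasible {n m : ℕ} (Ah : Matrix (Fin n) (Fin n) ℝ) (Bh : Matrix (Fin n) (Fin m) ℝ)
    (K : Matrix (Fin m) (Fin n) ℝ)
    (FΔ : ℕ → Matrix (Fin n) (Fin n ⊕ Fin m) ℝ) (FW : ℕ → Matrix (Fin n) (Fin 1) ℝ)
    (X : Set (Matrix (Fin n) (Fin 1) ℝ)) (U : Set (Matrix (Fin m) (Fin 1) ℝ))
    (Xf : Set (Matrix (Fin n) (Fin 1) ℝ)) (x : Matrix (Fin n) (Fin 1) ℝ) (N : ℕ)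
    (z : ℕ → Matrix (Fin n) (Fin 1) ℝ) (v : ℕ → Matrix (Fin m) (Fin 1) ℝ) : Prop :=
  1 ≤ N ∧ z 0 = x ∧
  (∀ j < N, z (j + 1) = Ah * z j + Bh * v j) ∧
  (∀ j ≤ N, {z j} + Btube (Ah + Bh * K) FΔ FW z v j ⊆ X) ∧
  (∀ j < N, {v j} + (fun e => K * e) '' Btube (Ah + Bh * K) FΔ FW z v j ⊆ U) ∧
  {z N} + Btube (Ah + Bh * K) FΔ FW z v N ⊆ Xf

section IntervalMat

variable {ι κ : Type*}

lemma matAbs_one [DecidableEq ι] : matAbs (1 : Matrix ι ι ℝ) = 1 := by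
  ext i j
  by_cases h : i = j <;> simp [matAbs, one_apply, h]

lemma sub_mem_intervalMat_zero_iff {X C Δ : Matrix ι κ ℝ} :
    X - C ∈ intervalMat 0 Δ ↔ X ∈ intervalMat C Δ := by
  simp [intervalMat]

end IntervalMat

section Tube

variable {n m : ℕ} (AhK : Matrix (Fin n) (Fin n) ℝ)
  (FΔ : ℕ → Matrix (Fin n) (Fin n ⊕ Fin m) ℝ) (FW : ℕ → Matrix (Fin n) (Fin 1) ℝ)

lemma IDelta_zero : IDelta AhK FΔ 0 = intervalMat 0 (FΔ 0) := by
  simp [IDelta, matAbs_one]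

lemma IWvec_zero : IWvec AhK FW 0 = intervalMat 0 (FW 0) := by
  simp [IWvec, matAbs_one]

lemma mul_fromRows_add_mem_Btube_one {z : ℕ → Matrix (Fin n) (Fin 1) ℝ}
    {v : ℕ → Matrix (Fin m) (Fin 1) ℝ} {D : Matrix (Fin n) (Fin n ⊕ Fin m) ℝ}
    {w : Matrix (Fin n) (Fin 1) ℝ} (hD : D ∈ intervalMat 0 (FΔ 0))
    (hw : w ∈ intervalMat 0 (FW 0)) :
    D * fromRows (z 0) (v 0) + w ∈ Btube AhK FΔ FW z v 1 := by
  rw [Btube, sum_range_one, sum_range_one]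
  exact Set.add_mem_add ⟨D, IDelta_zero AhK FΔ ▸ hD, rfl⟩ (IWvec_zero AhK FW ▸ hw)

end Tube

lemma fromCols_mul_fromRows_add_sub {l n m p R : Type*} [Fintype n] [Fintype m] [Ring R]
    (A Ah : Matrix l n R) (B Bh : Matrix l m R) (x : Matrix n p R) (u : Matrix m p R)
    (w : Matrix l p R) :
    A * x + B * u + w =
      Ah * x + Bh * u + ((fromCols A B - fromCols Ah Bh) * fromRows x u + w) := by
  rw [Matrix.sub_mul, fromCols_mul_fromRows, fromCols_mul_fromRows]
  abel

theorem stmt16_general {n m : ℕ}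
    (Ah : Matrix (Fin n) (Fin n) ℝ) (Bh : Matrix (Fin n) (Fin m) ℝ)
    (K : Matrix (Fin m) (Fin n) ℝ)
    (ΔS : Matrix (Fin n) (Fin n ⊕ Fin m) ℝ)
    (wbar : Fin n → ℝ)
    (FΔ : ℕ → Matrix (Fin n) (Fin n ⊕ Fin m) ℝ) (hFΔ0 : FΔ 0 = ΔS)
    (FW : ℕ → Matrix (Fin n) (Fin 1) ℝ) (hFW0 : FW 0 = colVec wbar)
    (X : Set (Matrix (Fin n) (Fin 1) ℝ)) (U : Set (Matrix (Fin m) (Fin 1) ℝ))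
    (Xf : Set (Matrix (Fin n) (Fin 1) ℝ))
    (x : Matrix (Fin n) (Fin 1) ℝ)
    (z : ℕ → Matrix (Fin n) (Fin 1) ℝ) (v : ℕ → Matrix (Fin m) (Fin 1) ℝ)
    (hfeas : Feasible Ah Bh K FΔ FW X U Xf x 1 z v) :
    ∀ (A : Matrix (Fin n) (Fin n) ℝ) (B : Matrix (Fin n) (Fin m) ℝ),
      (∀ i j, |Matrix.fromCols A B i j - Matrix.fromCols Ah Bh i j| ≤ ΔS i j) →
      ∀ w ∈ intervalMat 0 (colVec wbar), A * x + B * v 0 + w ∈ Xf := by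
  intro A B hAB w hw
  obtain ⟨-, rfl, hstep, -, -, hterminal⟩ := hfeas
  have hD : fromCols A B - fromCols Ah Bh ∈ intervalMat 0 (FΔ 0) :=
    sub_mem_intervalMat_zero_iff.mpr (hFΔ0 ▸ hAB)
  rw [fromCols_mul_fromRows_add_sub A Ah B Bh, ← hstep 0 one_pos]
  exact hterminal <| Set.add_mem_add rfl <|
    mul_fromRows_add_mem_Btube_one _ FΔ FW hD (hFW0 ▸ hw)

/-- one-step entry into the terminal set. -/
theorem stmt16 {n m : ℕ}
    (Ah : Matrix (Fin n) (Fin n) ℝ) (Bh : Matrix (Fin n) (Fin m) ℝ)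
    (K : Matrix (Fin m) (Fin n) ℝ)
    (ΔS : Matrix (Fin n) (Fin n ⊕ Fin m) ℝ) (hΔS : ∀ i j, 0 ≤ ΔS i j)
    (wbar : Fin n → ℝ) (hwbar : ∀ i, 0 ≤ wbar i)
    (FΔ : ℕ → Matrix (Fin n) (Fin n ⊕ Fin m) ℝ) (hFΔ0 : FΔ 0 = ΔS)
    (hFΔ : ∀ j, FΔ (j + 1) =
      (ΔS.submatrix id Sum.inl + ΔS.submatrix id Sum.inr * matAbs K) *
        ∑ i ∈ Finset.range (j + 1), matAbs ((Ah + Bh * K) ^ (j - i)) * FΔ i)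
    (FW : ℕ → Matrix (Fin n) (Fin 1) ℝ) (hFW0 : FW 0 = colVec wbar)
    (hFW : ∀ j, FW (j + 1) =
      (ΔS.submatrix id Sum.inl + ΔS.submatrix id Sum.inr * matAbs K) *
        ∑ i ∈ Finset.range (j + 1), matAbs ((Ah + Bh * K) ^ (j - i)) * FW i)
    (X : Set (Matrix (Fin n) (Fin 1) ℝ)) (U : Set (Matrix (Fin m) (Fin 1) ℝ))
    (Xf : Set (Matrix (Fin n) (Fin 1) ℝ))
    (x : Matrix (Fin n) (Fin 1) ℝ)
    (z : ℕ → Matrix (Fin n) (Fin 1) ℝ) (v : ℕ → Matrix (Fin m) (Fin 1) ℝ)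
    (hfeas : Feasible Ah Bh K FΔ FW X U Xf x 1 z v) :
    ∀ (A : Matrix (Fin n) (Fin n) ℝ) (B : Matrix (Fin n) (Fin m) ℝ),
      (∀ i j, |Matrix.fromCols A B i j - Matrix.fromCols Ah Bh i j| ≤ ΔS i j) →
      ∀ w ∈ intervalMat 0 (colVec wbar), A * x + B * v 0 + w ∈ Xf :=
  stmt16_general Ah Bh K ΔS wbar FΔ hFΔ0 FW hFW0 X U Xf x z v hfeas
end
end

section
/- Tube-shift inclusion for the model-uncertainty term: let Â_K ∈ ℝ^{n×n}, K ∈ ℝ^{m×n}, Δ_S ∈ ℝ^{n×(n+m)} with Δ_S ≥ 0, M_K = [Iₙ; K] (the (n+m)×n vertical stacking), Δ_K = Δ_S|M_K|, F_0 = Δ_S, F_{j+1} = Δ_K Σ_{i=0}^j |Â_K^{j−i}| F_i, and ℐ^Δ(j) = [± Σ_{i=0}^j |Â_K^{j−i}| F_i]. Then for every j ≥ 0, every ξ₀ ∈ ℝ^{n+m}, and every δ ∈ [±Δ_S]ξ₀ = {Dξ₀ : |D| ≤ Δ_S}, one has {Â_K^j δ} ⊕ Σ_{i=0}^{j−1}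 ℐ^Δ(j−i−1){M_K Â_K^i δ} ⊆ ℐ^Δ(j)ξ₀. -/
open Matrix Finset Pointwise

noncomputable section

/-!
Write `δ = D ξ₀` with `|D| ≤ Δ_S` and pick `E_i ∈ ℐ^Δ(j-i-1)` for the summands. The point is then
`X ξ₀` for `X = Â_K^j D + Σ_{i<j} E_i M_K Â_K^i D`, and interval arithmetic bounds `|X|` by
`|Â_K^j| Δ_S + Σ_{i<j} S_{j-i-1} |M_K| |Â_K^i| Δ_S`, where `S_j = Σ_{i≤j} |Â_K^{j-i}| F_i`.
With `C_k = |Â_K^k| Δ_S` and `q = |M_K|`, the recursion for `F` says that, as power series,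
`S = C + X (C q) S`; solving it from the other side gives `S = C + X S (q C)`, which is exactly
the statement that this bound equals `S_j`, the radius of `ℐ^Δ(j)`.
-/

section MatConv

variable {R : Type*} [Ring R] {ι κ μ ν : Type*} [Fintype κ]

/-- The Cauchy product: coefficients of `(Σ uₖ Xᵏ) (Σ vₖ Xᵏ)` for rectangular matrix sequences. -/
def matConv (u : ℕ → Matrix ι κ R) (v : ℕ → Matrix κ μ R) (j : ℕ) : Matrix ι μ R :=
  ∑ p ∈ antidiagonal j, u p.1 * v p.2

theorem matConv_eq_sum_range (u : ℕ → Matrix ι κ R) (v : ℕ → Matrix κ μ R) (j : ℕ) :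
    matConv u v j = ∑ i ∈ range (j + 1), u (j - i) * v i := by
  rw [matConv, ← Nat.sum_antidiagonal_swap]
  exact Nat.sum_antidiagonal_eq_sum_range_succ (fun a b => u b * v a) j

theorem matConv_succ_left (u : ℕ → Matrix ι κ R) (v : ℕ → Matrix κ μ R) (j : ℕ) :
    matConv u v (j + 1) = u 0 * v (j + 1) + matConv (fun k => u (k + 1)) v j :=
  Nat.sum_antidiagonal_succ

theorem matConv_succ_right (u : ℕ → Matrix ι κ R) (v : ℕ → Matrix κ μ R) (j : ℕ) :
    matConv u v (j + 1) = u (j + 1) * v 0 + matConv u (fun k => v (k + 1)) j :=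
  Nat.sum_antidiagonal_succ'

theorem matConv_add_right (u : ℕ → Matrix ι κ R) (v w : ℕ → Matrix κ μ R) :
    matConv u (v + w) = matConv u v + matConv u w := by
  ext1 j
  simp only [matConv, Pi.add_apply, Matrix.mul_add, sum_add_distrib]

theorem matConv_add_left (u v : ℕ → Matrix ι κ R) (w : ℕ → Matrix κ μ R) :
    matConv (u + v) w = matConv u w + matConv v w := by
  ext1 j
  simp only [matConv, Pi.add_apply, Matrix.add_mul, sum_add_distrib]

theorem matConv_sub_right (u : ℕ → Matrix ι κ R) (v w : ℕ → Matrix κ μ R) :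
    matConv u (v - w) = matConv u v - matConv u w := by
  ext1 j
  simp only [matConv, Pi.sub_apply, Matrix.mul_sub, sum_sub_distrib]

theorem matConv_assoc [Fintype μ] (u : ℕ → Matrix ι κ R) (v : ℕ → Matrix κ μ R)
    (w : ℕ → Matrix μ ν R) :
    matConv (matConv u v) w = matConv u (matConv v w) := by
  ext1 j
  simp only [matConv, Matrix.sum_mul, Matrix.mul_sum, sum_sigma']
  apply sum_nbij' (fun ⟨⟨_i, j⟩, ⟨k, l⟩⟩ ↦ ⟨(k, l + j), (l, j)⟩)
    (fun ⟨⟨i, _j⟩, ⟨k, l⟩⟩ ↦ ⟨(i + k, l), (i, k)⟩) <;>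
    aesop (add simp [add_assoc, Matrix.mul_assoc])

theorem matConv_mul_const [Fintype μ] (u : ℕ → Matrix ι κ R) (B : Matrix κ μ R)
    (v : ℕ → Matrix μ ν R) :
    matConv (fun k => u k * B) v = matConv u (fun k => B * v k) := by
  ext1 j
  simp only [matConv, Matrix.mul_assoc]

theorem eq_zero_of_eq_matConv {u : ℕ → Matrix κ κ R} {e : ℕ → Matrix κ μ R} (h0 : e 0 = 0)
    (hsucc : ∀ j, e (j + 1) = matConv u e j) : e = 0 := by
  funext j
  induction j using Nat.strong_induction_on with
  | _ j ih =>
    cases j with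
    | zero => exact h0
    | succ j =>
      rw [hsucc, matConv]
      refine sum_eq_zero fun p hp => ?_
      rw [ih p.2 (by have := mem_antidiagonal.mp hp; omega)]
      exact Matrix.mul_zero _

theorem matConv_succ_right_of_eq_add (a : ℕ → Matrix ι κ R) {s c t : ℕ → Matrix κ μ R}
    (hs0 : s 0 = c 0) (hs : ∀ j, s (j + 1) = c (j + 1) + t j) (j : ℕ) :
    matConv a s (j + 1) = matConv a c (j + 1) + matConv a t j := by
  have htail : (fun k => s (k + 1)) = (fun k => c (k + 1)) + t := funext hs
  rw [matConv_succ_right, matConv_succ_right a c, hs0, htail, matConv_add_right, Pi.add_apply,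
    add_assoc]

theorem matConv_succ_left_of_eq_add {s c t : ℕ → Matrix ι κ R} (b : ℕ → Matrix κ μ R)
    (hs0 : s 0 = c 0) (hs : ∀ j, s (j + 1) = c (j + 1) + t j) (j : ℕ) :
    matConv s b (j + 1) = matConv c b (j + 1) + matConv t b j := by
  have htail : (fun k => s (k + 1)) = (fun k => c (k + 1)) + t := funext hs
  rw [matConv_succ_left, matConv_succ_left c, hs0, htail, matConv_add_left, Pi.add_apply,
    add_assoc]

/-- As power series, `s = c + X c q s` forces `s = Σ (X c q)ᵏ c = c Σ (X q c)ᵏ = c + X s q c`.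
Here: the difference `e` of the two convolutions satisfies `e = X (c q) ⋆ e`, hence vanishes. -/
theorem succ_eq_add_matConv_symm [Fintype μ] {c s : ℕ → Matrix κ μ R} {q : Matrix μ κ R}
    (hs0 : s 0 = c 0) (hs : ∀ j, s (j + 1) = c (j + 1) + matConv (fun k => c k * q) s j)
    (j : ℕ) : s (j + 1) = c (j + 1) + matConv s (fun k => q * c k) j := by
  set u := fun k => c k * q
  set w := fun k => q * c k
  suffices h : matConv u s - matConv s w = 0 by rw [hs, sub_eq_zero.mp h]
  have hcomm : matConv u c = matConv c w := matConv_mul_const c q c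
  refine eq_zero_of_eq_matConv (u := u) ?_ fun j => ?_
  · simp [matConv, hs0, u, w, Matrix.mul_assoc]
  · rw [Pi.sub_apply, matConv_succ_right_of_eq_add u hs0 hs,
      matConv_succ_left_of_eq_add w hs0 hs, hcomm, matConv_assoc, matConv_sub_right, Pi.sub_apply]
    abel

theorem matConv_eq_add_sum_range [Fintype μ] {a : ℕ → Matrix κ κ R} {F : ℕ → Matrix κ μ R}
    {Δ : Matrix κ μ R} {q : Matrix μ κ R} (hF0 : F 0 = Δ)
    (hF : ∀ j, F (j + 1) = Δ * q * matConv a F j) (j : ℕ) :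
    matConv a F j = a j * Δ + ∑ i ∈ range j, matConv a F (j - i - 1) * (q * (a i * Δ)) := by
  have hs0 : matConv a F 0 = a 0 * Δ := by simp [matConv, hF0]
  have hs : ∀ j, matConv a F (j + 1) =
      a (j + 1) * Δ + matConv (fun k => a k * Δ * q) (matConv a F) j := by
    intro j
    have hassoc : (fun k => a k * Δ * q) = fun k => a k * (Δ * q) :=
      funext fun k => Matrix.mul_assoc _ _ _
    rw [matConv_succ_right, hF0, hassoc, matConv_mul_const]
    simp only [hF]
  cases j with
  | zero => simp [hs0]
  | succ j =>
    rw [succ_eq_add_matConv_symm (c := fun k => a k * Δ) hs0 hs j,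
      matConv_eq_sum_range (matConv a F)]
    refine congrArg _ (sum_congr rfl fun i hi => ?_)
    rw [show j + 1 - i - 1 = j - i by omega]

end MatConv

section IntervalArithmetic

variable {α ι κ μ : Type*}

theorem mem_intervalMat_zero {X Δ : Matrix ι κ ℝ} :
    X ∈ intervalMat 0 Δ ↔ ∀ i j, |X i j| ≤ Δ i j := by
  simp [intervalMat]

theorem self_mem_intervalMat_matAbs (A : Matrix ι κ ℝ) : A ∈ intervalMat 0 (matAbs A) :=
  mem_intervalMat_zero.mpr fun _ _ => le_rfl

theorem add_mem_intervalMat_zero {X Y Δ Γ : Matrix ι κ ℝ} (hX : X ∈ intervalMat 0 Δ)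
    (hY : Y ∈ intervalMat 0 Γ) : X + Y ∈ intervalMat 0 (Δ + Γ) :=
  mem_intervalMat_zero.mpr fun i j =>
    (abs_add_le _ _).trans (add_le_add (mem_intervalMat_zero.mp hX i j)
      (mem_intervalMat_zero.mp hY i j))

theorem sum_mem_intervalMat_zero {s : Finset α} {X Δ : α → Matrix ι κ ℝ}
    (h : ∀ a ∈ s, X a ∈ intervalMat 0 (Δ a)) : ∑ a ∈ s, X a ∈ intervalMat 0 (∑ a ∈ s, Δ a) := by
  refine mem_intervalMat_zero.mpr fun i j => ?_
  simp only [Matrix.sum_apply]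
  exact (abs_sum_le_sum_abs _ _).trans
    (sum_le_sum fun a ha => mem_intervalMat_zero.mp (h a ha) i j)

theorem mul_mem_intervalMat_zero [Fintype κ] {X Δ : Matrix ι κ ℝ} {Y Γ : Matrix κ μ ℝ}
    (hX : X ∈ intervalMat 0 Δ) (hY : Y ∈ intervalMat 0 Γ) : X * Y ∈ intervalMat 0 (Δ * Γ) := by
  rw [mem_intervalMat_zero] at hX hY ⊢
  intro i j
  simp only [Matrix.mul_apply]
  refine (abs_sum_le_sum_abs _ _).trans (sum_le_sum fun k _ => ?_)
  rw [abs_mul]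
  exact mul_le_mul (hX i k) (hY k j) (abs_nonneg _) ((abs_nonneg _).trans (hX i k))

end IntervalArithmetic

theorem stmt18_general {n m : ℕ} (AhK : Matrix (Fin n) (Fin n) ℝ) (K : Matrix (Fin m) (Fin n) ℝ)
    (ΔS : Matrix (Fin n) (Fin n ⊕ Fin m) ℝ)
    (FΔ : ℕ → Matrix (Fin n) (Fin n ⊕ Fin m) ℝ) (hFΔ0 : FΔ 0 = ΔS)
    (hFΔ : ∀ j, FΔ (j + 1) =
      (ΔS * matAbs (Matrix.fromRows (1 : Matrix (Fin n) (Fin n) ℝ) K)) *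
        ∑ i ∈ Finset.range (j + 1), matAbs (AhK ^ (j - i)) * FΔ i) :
    ∀ (j : ℕ) (ξ₀ : Matrix (Fin n ⊕ Fin m) (Fin 1) ℝ),
      ∀ δ ∈ (fun D => D * ξ₀) '' intervalMat 0 ΔS,
        {AhK ^ j * δ} + ∑ i ∈ Finset.range j,
            (fun D => D * (Matrix.fromRows 1 K * (AhK ^ i * δ))) ''
              IDelta AhK FΔ (j - i - 1) ⊆
          (fun D => D * ξ₀) '' IDelta AhK FΔ j := by
  set M := Matrix.fromRows (1 : Matrix (Fin n) (Fin n) ℝ) K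
  set a : ℕ → Matrix (Fin n) (Fin n) ℝ := fun k => matAbs (AhK ^ k)
  have hIDelta (j : ℕ) : IDelta AhK FΔ j = intervalMat 0 (matConv a FΔ j) := by
    rw [matConv_eq_sum_range]; rfl
  have hF (j : ℕ) : FΔ (j + 1) = ΔS * matAbs M * matConv a FΔ j := by
    rw [matConv_eq_sum_range]; exact hFΔ j
  rintro j ξ₀ _ ⟨D, hD, rfl⟩ _ ⟨_, rfl, _, hz, rfl⟩
  have hpow (i : ℕ) : AhK ^ i * D ∈ intervalMat 0 (a i * ΔS) :=
    mul_mem_intervalMat_zero (self_mem_intervalMat_matAbs _) hD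
  obtain ⟨g, hg, rfl⟩ := (Set.mem_finsetSum _ _ _).mp hz
  choose! E hE hgE using fun i (hi : i ∈ range j) => hg hi
  refine ⟨AhK ^ j * D + ∑ i ∈ range j, E i * (M * (AhK ^ i * D)), ?_, ?_⟩
  · rw [hIDelta, matConv_eq_add_sum_range hFΔ0 hF j]
    exact add_mem_intervalMat_zero (hpow j) (sum_mem_intervalMat_zero fun i hi =>
      mul_mem_intervalMat_zero (hIDelta _ ▸ hE i hi)
        (mul_mem_intervalMat_zero (self_mem_intervalMat_matAbs M) (hpow i)))
  · simp only [Matrix.add_mul, Matrix.sum_mul, Matrix.mul_assoc]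
    exact congrArg _ (sum_congr rfl hgE)

/-- tube-shift inclusion for the model-uncertainty term:
`{Â_K^j δ} ⊕ Σ_{i<j} ℐ^Δ(j−i−1){M_K Â_K^i δ} ⊆ ℐ^Δ(j)ξ₀` for every `δ ∈ [±Δ_S]ξ₀`. -/
theorem stmt18 {n m : ℕ} (AhK : Matrix (Fin n) (Fin n) ℝ) (K : Matrix (Fin m) (Fin n) ℝ)
    (ΔS : Matrix (Fin n) (Fin n ⊕ Fin m) ℝ) (hΔS : ∀ i j, 0 ≤ ΔS i j)
    (FΔ : ℕ → Matrix (Fin n) (Fin n ⊕ Fin m) ℝ) (hFΔ0 : FΔ 0 = ΔS)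
    (hFΔ : ∀ j, FΔ (j + 1) =
      (ΔS * matAbs (Matrix.fromRows (1 : Matrix (Fin n) (Fin n) ℝ) K)) *
        ∑ i ∈ Finset.range (j + 1), matAbs (AhK ^ (j - i)) * FΔ i) :
    ∀ (j : ℕ) (ξ₀ : Matrix (Fin n ⊕ Fin m) (Fin 1) ℝ),
      ∀ δ ∈ (fun D => D * ξ₀) '' intervalMat 0 ΔS,
        {AhK ^ j * δ} + ∑ i ∈ Finset.range j,
            (fun D => D * (Matrix.fromRows 1 K * (AhK ^ i * δ))) ''
              IDelta AhK FΔ (j - i - 1) ⊆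
          (fun D => D * ξ₀) '' IDelta AhK FΔ j :=
  stmt18_general AhK K ΔS FΔ hFΔ0 hFΔ
end
end
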